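/- For all 0 < r < π one has ψ(r) > √(ψ′(r)/r); equivalently ψ(r)² > ψ′(r)/r > 0 on (0,π). -/

import Mathlib

open Real MeasureTheory Asymptotics Filter

noncomputable section
open scoped Classical

/-- `ψ(r) = (1 − r·cot r)/r²`, extended continuously by `ψ(0) := 1/3`. -/
def psi (r : ℝ) : ℝ := if r = 0 then 1/3 else (1 - r * (Real.cos r / Real.sin r)) / r ^ 2

/-!
With `s = sin r` and `c = cos r` one has `ψ(r) = (s - r c)/(r² s)`,
`ψ'(r)/r = (r² - 2 s² + r s c)/(r⁴ s²)` and
`ψ(r)² - ψ'(r)/r = (3 (s - r c) - r² s)/(r⁴ s)`.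
On `(0, π]` each numerator is positive because it vanishes at `0` and increases:
`s - r c` has derivative `r s`, `3 (s - r c) - r² s` has derivative `r (s - r c)`, and
the derivative `2 r - 3 s c + r (c² - s²)` of `r² - 2 s² + r s c` in turn vanishes at `0`
and has derivative `4 s (s - r c)`.
-/

open Set

theorem pos_of_hasDerivAt_of_eq_zero {f f' : ℝ → ℝ} {a b x : ℝ}
    (hf : ∀ y ∈ Icc a b, HasDerivAt f (f' y) y) (ha : f a = 0)
    (hf' : ∀ y ∈ Ioo a b, 0 < f' y) (hx : x ∈ Ioc a b) : 0 < f x := by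
  have hmono : StrictMonoOn f (Icc a b) := by
    refine strictMonoOn_of_deriv_pos (convex_Icc a b)
      (fun y hy => (hf y hy).continuousAt.continuousWithinAt) fun y hy => ?_
    rw [interior_Icc] at hy
    rw [(hf y (Ioo_subset_Icc_self hy)).deriv]
    exact hf' y hy
  simpa [ha] using hmono (left_mem_Icc.2 (hx.1.le.trans hx.2)) (Ioc_subset_Icc_self hx) hx.1

theorem sin_sub_mul_cos_pos {x : ℝ} (hx : x ∈ Ioc 0 π) : 0 < sin x - x * cos x := by
  refine pos_of_hasDerivAt_of_eq_zero (f := fun y => sin y - y * cos y)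
    (f' := fun y => y * sin y) (fun y _ => ?_) (by simp)
    (fun y hy => mul_pos hy.1 (sin_pos_of_pos_of_lt_pi hy.1 hy.2)) hx
  exact ((hasDerivAt_sin y).sub ((hasDerivAt_id' y).mul (hasDerivAt_cos y))).congr_deriv (by ring)

theorem three_mul_sin_sub_mul_cos_sub_sq_mul_sin_pos {x : ℝ} (hx : x ∈ Ioc 0 π) :
    0 < 3 * (sin x - x * cos x) - x ^ 2 * sin x := by
  refine pos_of_hasDerivAt_of_eq_zero (f := fun y => 3 * (sin y - y * cos y) - y ^ 2 * sin y)
    (f' := fun y => y * (sin y - y * cos y)) (fun y _ => ?_) (by simp)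
    (fun y hy => mul_pos hy.1 (sin_sub_mul_cos_pos (Ioo_subset_Ioc_self hy))) hx
  refine ((((hasDerivAt_sin y).sub ((hasDerivAt_id' y).mul (hasDerivAt_cos y))).const_mul 3).sub
    ((hasDerivAt_pow 2 y).mul (hasDerivAt_sin y))).congr_deriv ?_
  push_cast
  ring

theorem sq_sub_two_mul_sin_sq_add_mul_sin_mul_cos_pos {x : ℝ} (hx : x ∈ Ioc 0 π) :
    0 < x ^ 2 - 2 * sin x ^ 2 + x * sin x * cos x := by
  have hderiv_pos : ∀ y ∈ Ioc 0 π,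
      0 < 2 * y - 3 * sin y * cos y + y * (cos y ^ 2 - sin y ^ 2) := by
    refine fun y hy => pos_of_hasDerivAt_of_eq_zero
      (f := fun z => 2 * z - 3 * sin z * cos z + z * (cos z ^ 2 - sin z ^ 2))
      (f' := fun z => 4 * sin z * (sin z - z * cos z)) (fun z _ => ?_) (by simp)
      (fun z hz => by
        have := sin_pos_of_pos_of_lt_pi hz.1 hz.2
        have := sin_sub_mul_cos_pos (Ioo_subset_Ioc_self hz)
        positivity) hy
    refine ((((hasDerivAt_id' z).const_mul 2).sub
      (((hasDerivAt_sin z).const_mul 3).mul (hasDerivAt_cos z))).add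
      ((hasDerivAt_id' z).mul (((hasDerivAt_cos z).pow 2).sub ((hasDerivAt_sin z).pow 2))))
      |>.congr_deriv ?_
    simp only [Pi.pow_apply, Pi.sub_apply]
    push_cast
    linear_combination -2 * sin_sq_add_cos_sq z
  refine pos_of_hasDerivAt_of_eq_zero (f := fun y => y ^ 2 - 2 * sin y ^ 2 + y * sin y * cos y)
    (fun y _ => ?_) (by simp) (fun y hy => hderiv_pos y (Ioo_subset_Ioc_self hy)) hx
  refine (((hasDerivAt_pow 2 y).sub (((hasDerivAt_sin y).pow 2).const_mul 2)).add
    (((hasDerivAt_id' y).mul (hasDerivAt_sin y)).mul (hasDerivAt_cos y))).congr_deriv ?_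
  simp only [Pi.mul_apply]
  push_cast
  ring

section psi

variable {r : ℝ}

theorem psi_eq (hr : r ≠ 0) (hs : sin r ≠ 0) :
    psi r = (sin r - r * cos r) / (r ^ 2 * sin r) := by
  rw [psi, if_neg hr]
  field_simp

theorem hasDerivAt_psi (hr : r ≠ 0) (hs : sin r ≠ 0) :
    HasDerivAt psi ((r ^ 2 - 2 * sin r ^ 2 + r * sin r * cos r) / (r ^ 3 * sin r ^ 2)) r := by
  have heq : (fun x => (1 - x * (cos x / sin x)) / x ^ 2) =ᶠ[nhds r] psi := by
    filter_upwards [isOpen_ne.mem_nhds hr] with x hx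
    simp [psi, hx]
  refine HasDerivAt.congr_of_eventuallyEq ?_ heq.symm
  refine (((hasDerivAt_const r 1).sub ((hasDerivAt_id' r).mul
    ((hasDerivAt_cos r).div (hasDerivAt_sin r) hs))).div (hasDerivAt_pow 2 r)
    (pow_ne_zero 2 hr)).congr_deriv ?_
  simp only [Pi.sub_apply, Pi.mul_apply, Pi.div_apply]
  field_simp
  linear_combination r ^ 3 * sin_sq_add_cos_sq r

theorem psi_sq_sub_deriv_psi_div (hr : r ≠ 0) (hs : sin r ≠ 0) :
    psi r ^ 2 - deriv psi r / r = (3 * (sin r - r * cos r) - r ^ 2 * sin r) / (r ^ 4 * sin r) := by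
  rw [psi_eq hr hs, (hasDerivAt_psi hr hs).deriv]
  field_simp
  linear_combination r ^ 2 * sin_sq_add_cos_sq r

end psi

/-- for `0 < r < π`, `ψ(r) > √(ψ′(r)/r)`; equivalently
`ψ(r)² > ψ′(r)/r > 0` on `(0,π)`. -/
theorem statement15 :
    ∀ r : ℝ, 0 < r → r < Real.pi →
      Real.sqrt (deriv psi r / r) < psi r ∧
      0 < deriv psi r / r ∧ deriv psi r / r < psi r ^ 2 := by
  intro r hr hrπ
  have hs : 0 < sin r := sin_pos_of_pos_of_lt_pi hr hrπ
  have hrI : r ∈ Ioc 0 π := ⟨hr, hrπ.le⟩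
  have hψ : 0 < psi r := by
    rw [psi_eq hr.ne' hs.ne']
    exact div_pos (sin_sub_mul_cos_pos hrI) (by positivity)
  have hpos : 0 < deriv psi r / r := by
    rw [(hasDerivAt_psi hr.ne' hs.ne').deriv, div_div]
    exact div_pos (sq_sub_two_mul_sin_sq_add_mul_sin_mul_cos_pos hrI) (by positivity)
  have hlt : deriv psi r / r < psi r ^ 2 := by
    rw [← sub_pos, psi_sq_sub_deriv_psi_div hr.ne' hs.ne']
    exact div_pos (three_mul_sin_sub_mul_cos_sub_sq_mul_sin_pos hrI) (by positivity)
  exact ⟨(sqrt_lt' hψ).2 hlt, hpos, hlt⟩
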